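/- Let $\alpha_i \in [0,1]$, $\tau_n = \sum_{k=1}^n \alpha_k(1-\alpha_k)$, $\sigma(y) = \min\{1, (\pi y)^{-1/2}\}$, and suppose $\epsilon_n \leq (1-\alpha_n) f(\tau_n)$ where $f: [0,\infty) \to [0,\infty)$ is nonincreasing. Then with $\eta = \sqrt{1 + 4/\pi}$, for all $n$: $\sum_{i=1}^n 2\alpha_i \epsilon_i \sigma(\tau_n - \tau_i) \leq \eta \int_0^{\tau_n} f(s)/\sqrt{\tau_n - s}\, ds$. -/

import Mathlib

/-!
Cut `[0, τ n]` at the points `τ k`. The piece `[τ (k-1), τ k]` has length `Δ = α k (1 - α k) ≤ 1/4`,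
`f ≥ f (τ k)` on it, and `∫ ds / √(τ n - s)` over it equals `2 (√(y + Δ) - √y)` with `y = τ n - τ k`.
So the `k`-th term of the sum is at most `2 Δ f (τ k) σ(y)`, and it remains to see
`Δ σ(y) ≤ η (√(y + Δ) - √y)`, i.e. `σ(y) (√(y + Δ) + √y) ≤ η`. Squaring, this follows from
`(√(y + Δ) + √y)² ≤ 4y + 1/2` together with `σ(y)² ≤ 1` and `σ(y)² π y ≤ 1`.
-/

open Finset

/-- `σ(y) = min{1, 1/√(π y)}` for `y > 0`, with `σ(y) = 1` for `y ≤ 0`. -/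
noncomputable def sigmaKM (y : ℝ) : ℝ :=
  if y ≤ 0 then 1 else min 1 (1 / Real.sqrt (Real.pi * y))

/-- `τ n = ∑_{k=1}^n α k (1 - α k)`. -/
noncomputable def tauKM (α : ℕ → ℝ) (n : ℕ) : ℝ :=
  ∑ k ∈ Finset.Icc 1 n, α k * (1 - α k)

open Real MeasureTheory Set

lemma sigmaKM_nonneg (y : ℝ) : 0 ≤ sigmaKM y := by
  unfold sigmaKM
  split_ifs
  exacts [zero_le_one, le_min zero_le_one (by positivity)]

lemma sigmaKM_le_one (y : ℝ) : sigmaKM y ≤ 1 := by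
  unfold sigmaKM
  split_ifs
  exacts [le_rfl, min_le_left _ _]

lemma sigmaKM_sq_mul_le_one (y : ℝ) : sigmaKM y ^ 2 * (π * y) ≤ 1 := by
  unfold sigmaKM
  split_ifs with hy
  · nlinarith [pi_pos]
  · have hπy : 0 < π * y := mul_pos pi_pos (not_le.1 hy)
    calc min 1 (1 / √(π * y)) ^ 2 * (π * y) ≤ (1 / √(π * y)) ^ 2 * (π * y) :=
          mul_le_mul_of_nonneg_right
            (pow_le_pow_left₀ (le_min zero_le_one (by positivity)) (min_le_right _ _) 2) hπy.le
      _ = 1 := by rw [div_pow, one_pow, sq_sqrt hπy.le, one_div_mul_cancel hπy.ne']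

lemma sigmaKM_mul_sqrt_add_sqrt_le {y Δ : ℝ} (hy : 0 ≤ y) (hΔ : 0 ≤ Δ) (hΔ' : Δ ≤ 1 / 4) :
    sigmaKM y * (√(y + Δ) + √y) ≤ √(1 + 4 / π) := by
  have hσ := sigmaKM_nonneg y
  rw [le_sqrt (by positivity) (by positivity), mul_pow]
  have hsum_sq : (√(y + Δ) + √y) ^ 2 ≤ 4 * y + 1 / 2 := by
    nlinarith [sq_nonneg (√(y + Δ) - √y), sq_sqrt hy, sq_sqrt (add_nonneg hy hΔ)]
  have hσ_sq : sigmaKM y ^ 2 ≤ 1 := pow_le_one₀ hσ (sigmaKM_le_one y)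
  calc sigmaKM y ^ 2 * (√(y + Δ) + √y) ^ 2 ≤ sigmaKM y ^ 2 * (4 * y + 1 / 2) := by gcongr
    _ = 4 / π * (sigmaKM y ^ 2 * (π * y)) + sigmaKM y ^ 2 / 2 := by field_simp
    _ ≤ 4 / π * 1 + 1 / 2 := by gcongr; exact sigmaKM_sq_mul_le_one y
    _ ≤ 1 + 4 / π := by linarith

lemma mul_sigmaKM_le_sqrt_sub_sqrt {y Δ : ℝ} (hy : 0 ≤ y) (hΔ : 0 ≤ Δ) (hΔ' : Δ ≤ 1 / 4) :
    Δ * sigmaKM y ≤ √(1 + 4 / π) * (√(y + Δ) - √y) := by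
  have hdiff : 0 ≤ √(y + Δ) - √y := sub_nonneg.2 (sqrt_le_sqrt (by linarith))
  calc Δ * sigmaKM y = sigmaKM y * (√(y + Δ) + √y) * (√(y + Δ) - √y) := by
        linear_combination sigmaKM y * (sq_sqrt hy - sq_sqrt (add_nonneg hy hΔ))
    _ ≤ √(1 + 4 / π) * (√(y + Δ) - √y) := by
        gcongr; exact sigmaKM_mul_sqrt_add_sqrt_le hy hΔ hΔ'

/-- For `x < 0` both sides vanish: `√x = 0`, and `x ^ (-1/2)` carries the factor `cos (π / 2)`. -/
lemma inv_sqrt_eq_rpow (x : ℝ) : (√x)⁻¹ = x ^ (-(1 / 2) : ℝ) := by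
  rcases lt_or_ge x 0 with hx | hx
  · rw [sqrt_eq_zero_of_nonpos hx.le, rpow_def_of_neg hx, neg_mul, cos_neg,
      one_div_mul_eq_div, cos_pi_div_two]
    simp
  · rw [rpow_neg hx, ← sqrt_eq_rpow]

lemma intervalIntegrable_inv_sqrt_sub (T a b : ℝ) :
    IntervalIntegrable (fun s => (√(T - s))⁻¹) volume a b := by
  simpa only [inv_sqrt_eq_rpow, sub_sub_cancel] using
    (intervalIntegral.intervalIntegrable_rpow' (a := T - a) (b := T - b)
      (show (-1 : ℝ) < -(1 / 2) by norm_num)).comp_sub_left T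

lemma integral_inv_sqrt_sub (T a b : ℝ) :
    ∫ s in a..b, (√(T - s))⁻¹ = 2 * (√(T - a) - √(T - b)) := by
  simp only [inv_sqrt_eq_rpow]
  rw [intervalIntegral.integral_comp_sub_left (fun x => x ^ (-(1 / 2) : ℝ)) T,
    integral_rpow (Or.inl (by norm_num)), sqrt_eq_rpow, sqrt_eq_rpow]
  norm_num
  ring

lemma intervalIntegrable_div_sqrt_sub {f : ℝ → ℝ} {a b : ℝ} (T : ℝ) (hab : a ≤ b)
    (hf : AntitoneOn f (Icc a b)) :
    IntervalIntegrable (fun s => f s / √(T - s)) volume a b := by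
  rw [intervalIntegrable_iff_integrableOn_Ioc_of_le hab]
  simp only [div_eq_mul_inv]
  refine Integrable.bdd_mul (c := max |f b| |f a|)
    ((intervalIntegrable_iff_integrableOn_Ioc_of_le hab).1 (intervalIntegrable_inv_sqrt_sub T a b))
    (aemeasurable_restrict_of_antitoneOn measurableSet_Ioc
      (hf.mono Ioc_subset_Icc_self)).aestronglyMeasurable
    (ae_restrict_of_forall_mem measurableSet_Ioc fun s hs => ?_)
  have hs' : s ∈ Icc a b := Ioc_subset_Icc_self hs
  exact abs_le_max_abs_abs (hf hs' (right_mem_Icc.2 hab) hs'.2) (hf (left_mem_Icc.2 hab) hs' hs'.1)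

lemma two_mul_sigmaKM_le_integral {f : ℝ → ℝ} {a b T : ℝ} (hab : a ≤ b) (hbT : b ≤ T)
    (hba : b - a ≤ 1 / 4) (hf : AntitoneOn f (Icc a b)) (hfb : 0 ≤ f b) :
    2 * ((b - a) * f b) * sigmaKM (T - b) ≤ √(1 + 4 / π) * ∫ s in a..b, f s / √(T - s) := by
  have hkey := mul_sigmaKM_le_sqrt_sub_sqrt (sub_nonneg.2 hbT) (sub_nonneg.2 hab) hba
  rw [sub_add_sub_cancel] at hkey
  have hfrozen : ∫ s in a..b, f b / √(T - s) ≤ ∫ s in a..b, f s / √(T - s) :=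
    intervalIntegral.integral_mono_on hab ((intervalIntegrable_inv_sqrt_sub T a b).const_mul (f b))
      (intervalIntegrable_div_sqrt_sub T hab hf) fun s hs =>
        div_le_div_of_nonneg_right (hf hs (right_mem_Icc.2 hab) hs.2) (sqrt_nonneg _)
  calc 2 * ((b - a) * f b) * sigmaKM (T - b) = 2 * f b * ((b - a) * sigmaKM (T - b)) := by ring
    _ ≤ 2 * f b * (√(1 + 4 / π) * (√(T - a) - √(T - b))) := by gcongr
    _ = √(1 + 4 / π) * ∫ s in a..b, f b / √(T - s) := by
        simp only [div_eq_mul_inv, intervalIntegral.integral_const_mul, integral_inv_sqrt_sub T a b]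
        ring
    _ ≤ √(1 + 4 / π) * ∫ s in a..b, f s / √(T - s) := by gcongr

section tauKM

variable {α : ℕ → ℝ}

@[simp]
lemma tauKM_zero : tauKM α 0 = 0 := by simp [tauKM]

lemma tauKM_succ_sub (k : ℕ) : tauKM α (k + 1) - tauKM α k = α (k + 1) * (1 - α (k + 1)) := by
  rw [tauKM, tauKM, sum_Icc_succ_top (Nat.le_add_left 1 k), add_sub_cancel_left]

variable (hα : ∀ n, α n ∈ Icc (0 : ℝ) 1)
include hα

lemma tauKM_succ_sub_mem (k : ℕ) : tauKM α (k + 1) - tauKM α k ∈ Icc (0 : ℝ) (1 / 4) := by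
  obtain ⟨h0, h1⟩ := hα (k + 1)
  rw [tauKM_succ_sub]
  constructor <;> nlinarith [sq_nonneg (α (k + 1) - 1 / 2)]

lemma tauKM_monotone : Monotone (tauKM α) :=
  monotone_nat_of_le_succ fun k => sub_nonneg.1 (tauKM_succ_sub_mem hα k).1

lemma tauKM_nonneg (k : ℕ) : 0 ≤ tauKM α k :=
  tauKM_zero (α := α) ▸ tauKM_monotone hα (Nat.zero_le k)

end tauKM

theorem stmt13_general (α : ℕ → ℝ) (hα : ∀ n, α n ∈ Set.Icc (0:ℝ) 1)
    (ε : ℕ → ℝ)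
    (f : ℝ → ℝ) (hf_nonneg : ∀ s ∈ Set.Ici (0:ℝ), 0 ≤ f s)
    (hf_anti : AntitoneOn f (Set.Ici 0))
    (hεf : ∀ n, 1 ≤ n → ε n ≤ (1 - α n) * f (tauKM α n)) :
    ∀ n, ∑ i ∈ Finset.Icc 1 n, 2 * α i * ε i * sigmaKM (tauKM α n - tauKM α i)
      ≤ Real.sqrt (1 + 4 / Real.pi)
          * ∫ s in (0:ℝ)..(tauKM α n), f s / Real.sqrt (tauKM α n - s) := by
  intro n
  set T := tauKM α n
  have hf_anti' (k : ℕ) : AntitoneOn f (Icc (tauKM α k) (tauKM α (k + 1))) :=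
    hf_anti.mono fun s hs => le_trans (tauKM_nonneg hα k) hs.1
  have hstep (k : ℕ) (hk : k < n) : 2 * α (k + 1) * ε (k + 1) * sigmaKM (T - tauKM α (k + 1))
      ≤ √(1 + 4 / π) * ∫ s in tauKM α k..tauKM α (k + 1), f s / √(T - s) := by
    have hαε : α (k + 1) * ε (k + 1) ≤ (tauKM α (k + 1) - tauKM α k) * f (tauKM α (k + 1)) := by
      rw [tauKM_succ_sub, mul_assoc]
      exact mul_le_mul_of_nonneg_left (hεf (k + 1) k.succ_pos) (hα (k + 1)).1
    refine le_trans ?_ (two_mul_sigmaKM_le_integral (tauKM_monotone hα k.le_succ)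
      (tauKM_monotone hα hk) (tauKM_succ_sub_mem hα k).2 (hf_anti' k)
      (hf_nonneg _ (tauKM_nonneg hα _)))
    rw [mul_assoc 2]
    gcongr
    exact sigmaKM_nonneg _
  calc ∑ i ∈ Icc 1 n, 2 * α i * ε i * sigmaKM (T - tauKM α i)
      = ∑ k ∈ range n, 2 * α (k + 1) * ε (k + 1) * sigmaKM (T - tauKM α (k + 1)) := by
        rw [range_eq_Ico, sum_Ico_add' (fun i => 2 * α i * ε i * sigmaKM (T - tauKM α i))]
        rfl
    _ ≤ ∑ k ∈ range n, √(1 + 4 / π) * ∫ s in tauKM α k..tauKM α (k + 1), f s / √(T - s) :=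
        sum_le_sum fun k hk => hstep k (mem_range.1 hk)
    _ = √(1 + 4 / π) * ∫ s in (0 : ℝ)..T, f s / √(T - s) := by
        rw [← mul_sum, intervalIntegral.sum_integral_adjacent_intervals fun k _ =>
          intervalIntegrable_div_sqrt_sub T (tauKM_monotone hα k.le_succ) (hf_anti' k), tauKM_zero]

/-- if `ε n ≤ (1 - α n) f(τ n)` with `f : [0,∞) → [0,∞)` nonincreasing,
then with `η = √(1 + 4/π)`, for all `n`,
`∑_{i=1}^n 2 α i ε i σ(τ n - τ i) ≤ η ∫_0^{τ n} f(s)/√(τ n - s) ds`. -/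
theorem stmt13 (α : ℕ → ℝ) (hα : ∀ n, α n ∈ Set.Icc (0:ℝ) 1)
    (ε : ℕ → ℝ) (hε : ∀ n, 0 ≤ ε n)
    (f : ℝ → ℝ) (hf_nonneg : ∀ s ∈ Set.Ici (0:ℝ), 0 ≤ f s)
    (hf_anti : AntitoneOn f (Set.Ici 0))
    (hεf : ∀ n, 1 ≤ n → ε n ≤ (1 - α n) * f (tauKM α n)) :
    ∀ n, ∑ i ∈ Finset.Icc 1 n, 2 * α i * ε i * sigmaKM (tauKM α n - tauKM α i)
      ≤ Real.sqrt (1 + 4 / Real.pi)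
          * ∫ s in (0:ℝ)..(tauKM α n), f s / Real.sqrt (tauKM α n - s) :=
  stmt13_general α hα ε f hf_nonneg hf_anti hεf
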